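/- arXiv:2410.21609 — 4 statements merged into one kernel-verified Lean document; each statement's English description precedes it below -/
import Mathlib

section
/- Let X be a separable metric space and let μₙ be a sequence of finite Borel measures converging to μ in the Prokhorov (Lévy–Prokhorov) metric. Then for every closed set C ⊆ X, limsup_n μₙ(C) ≤ μ(C). -/
open MeasureTheory Metric Filter

theorem stmt5 {X : Type*} [MetricSpace X] [TopologicalSpace.SeparableSpace X]
    [MeasurableSpace X] [BorelSpace X]
    (μseq : ℕ → Measure X) (μ : Measure X)
    [∀ n, IsFiniteMeasure (μseq n)] [IsFiniteMeasure μ]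
    (hconv : Tendsto (fun n => levyProkhorovEDist (μseq n) μ) atTop (nhds 0))
    (C : Set X) (hC : IsClosed C) :
    limsup (fun n => (μseq n C).toReal) atTop ≤ (μ C).toReal := by
  have key : ∀ ε : ℝ, 0 < ε → limsup (fun n => (μseq n C).toReal) atTop
      ≤ (μ (thickening ε C)).toReal + ε := by
    intro ε hε
    have hev : ∀ᶠ n in atTop, levyProkhorovEDist (μseq n) μ < ENNReal.ofReal ε :=
      hconv.eventually_lt_const (by simp [hε])
    have hev2 : ∀ᶠ n in atTop,
        (μseq n C).toReal ≤ (μ (thickening ε C)).toReal + ε := by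
      filter_upwards [hev] with n hn
      have h := left_measure_le_of_levyProkhorovEDist_lt hn hC.measurableSet
      rw [ENNReal.toReal_ofReal hε.le] at h
      have h2 : μseq n C ≤ μ (thickening ε C) + ENNReal.ofReal ε := h
      calc (μseq n C).toReal ≤ (μ (thickening ε C) + ENNReal.ofReal ε).toReal :=
            ENNReal.toReal_mono (by finiteness) h2
        _ = (μ (thickening ε C)).toReal + ε := by
            rw [ENNReal.toReal_add (measure_ne_top _ _) ENNReal.ofReal_ne_top,
              ENNReal.toReal_ofReal hε.le]
    refine limsup_le_of_le ?_ hev2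
    exact isCoboundedUnder_le_of_eventually_le atTop (x := 0)
      (by filter_upwards with n using ENNReal.toReal_nonneg)
  have hthick : Tendsto (fun ε : ℝ => (μ (thickening ε C)).toReal + ε)
      (nhdsWithin 0 (Set.Ioi 0)) (nhds ((μ C).toReal + 0)) := by
    apply Tendsto.add
    · have := tendsto_measure_thickening_of_isClosed
        (μ := μ) ⟨1, one_pos, measure_ne_top μ _⟩ hC
      exact ((ENNReal.tendsto_toReal (measure_ne_top μ C)).comp this)
    · exact tendsto_nhdsWithin_of_tendsto_nhds tendsto_id
  rw [add_zero] at hthick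
  refine ge_of_tendsto hthick ?_
  filter_upwards [self_mem_nhdsWithin] with ε (hε : 0 < ε) using key ε hε
end

section
/- Let A ⊆ ℕ be any set and define x = Σ_{a∈A} 2^{-(a+1)}. If the left Dedekind cut {q ∈ ℚ : q < x} is a computable set of rationals, then A is a computable set. -/
/-!
To decide whether `n ∈ A`, suppose the first `n` digits of `x` are known, i.e. the partial sum
`s = ∑_{a < n, a ∈ A} 2^{-(a+1)}`, and ask the cut whether `s + 2^{-(n+1)} < x`. If `n ∈ A` this
holds as soon as `A` has an element beyond `n`; if `n ∉ A` it fails, because the digits beyond `n`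
contribute at most `2^{-(n+1)}`. So an infinite `A` is decided digit by digit, each query being a
dyadic rational computed from the digits found so far; a finite `A` is computable anyway.
-/

open Encodable Finset

-- `gcd a b` is the largest common divisor of `a` and `b` that is at most `a + b`.
theorem Primrec.nat_gcd : Primrec₂ Nat.gcd := by
  have hdvd : PrimrecRel fun k a : ℕ => k ∣ a :=
    (Primrec.eq.comp (Primrec.nat_mod.comp Primrec.snd Primrec.fst) (Primrec.const 0)).of_eq
      fun _ => Nat.dvd_iff_mod_eq_zero.symm
  have hcommon : PrimrecRel fun (p : ℕ × ℕ) (k : ℕ) => k ∣ p.1 ∧ k ∣ p.2 :=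
    (hdvd.comp Primrec.snd (Primrec.fst.comp Primrec.fst)).and
      (hdvd.comp Primrec.snd (Primrec.snd.comp Primrec.fst))
  refine (Primrec.nat_findGreatest (Primrec.nat_add.comp Primrec.fst Primrec.snd)
    hcommon).to₂.of_eq fun a b => Nat.findGreatest_eq_iff.2
      ⟨?_, fun _ => ⟨Nat.gcd_dvd_left a b, Nat.gcd_dvd_right a b⟩, ?_⟩
  · rcases Nat.eq_zero_or_pos a with rfl | ha
    · simp
    · exact (Nat.gcd_le_left b ha).trans (Nat.le_add_right a b)
  · rintro k hlt hle ⟨ha, hb⟩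
    rcases Nat.eq_zero_or_pos (Nat.gcd a b) with h | h
    · rw [Nat.gcd_eq_zero_iff] at h
      omega
    · exact absurd (Nat.le_of_dvd h (Nat.dvd_gcd ha hb)) (by omega)

theorem Primrec.nat_pow : Primrec₂ ((· ^ ·) : ℕ → ℕ → ℕ) :=
  Primrec₂.unpaired'.1 Nat.Primrec.pow

-- `ℤ` is encoded by `n ↦ 2 n` and `-(n+1) ↦ 2 n + 1`.
theorem Primrec.int_natCast : Primrec (Nat.cast : ℕ → ℤ) :=
  ((Primrec.ofNat ℤ).comp Primrec.nat_double).of_eq fun n => Denumerable.ofNat_encode (n : ℤ)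

theorem Primrec.int_natAbs : Primrec Int.natAbs :=
  (Primrec.nat_div.comp (Primrec.succ.comp Primrec.encode) (Primrec.const 2)).of_eq fun z => by
    cases z with
    | ofNat n => show (2 * n + 1) / 2 = _; simp; omega
    | negSucc n => show (2 * n + 1 + 1) / 2 = _; simp; omega

theorem Primrec.list_countP {α : Type*} [Primcodable α] {p : α → Prop} [DecidablePred p]
    (hp : PrimrecPred p) : Primrec fun L : List α => L.countP (p ·) :=
  (Primrec.list_length.comp (Primrec.listFilter hp)).of_eq
    fun _ => (List.countP_eq_length_filter ..).symm

theorem Set.Finite.primrecPred_mem {α : Type*} [Primcodable α] {s : Set α} (hs : s.Finite) :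
    PrimrecPred (· ∈ s) := by
  classical
  exact ((PrimrecRel.exists_mem_list Primrec.eq).comp (Primrec.const hs.toFinset.toList)
    Primrec.id).of_eq fun a => by simp

/-!
Two codings of `ℚ` are in play: `encode` (the `Encodable` instance) codes `q` by the pair
`(q.num, q.den)`, while the `Primcodable` instance used by `Primrec` and `ComputablePred` comes
from `Denumerable ℚ`, which codes `q` by the rank `Denumerable.eqv ℚ q` of `encode q` in the range
of `encode`.
-/

theorem Rat.encode_eq_pair (q : ℚ) : encode q = Nat.pair (encode q.num) q.den := rfl

theorem Rat.mem_range_encode_iff (m : ℕ) :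
    m ∈ Set.range (encode : ℚ → ℕ) ↔
      0 < m.unpair.2 ∧ (Denumerable.ofNat ℤ m.unpair.1).natAbs.Coprime m.unpair.2 := by
  constructor
  · rintro ⟨q, rfl⟩
    rw [Rat.encode_eq_pair, Nat.unpair_pair, Denumerable.ofNat_encode]
    exact ⟨q.den_pos, q.reduced⟩
  · rintro ⟨hpos, hcop⟩
    refine ⟨⟨Denumerable.ofNat ℤ m.unpair.1, m.unpair.2, hpos.ne', hcop⟩, ?_⟩
    rw [Rat.encode_eq_pair, Denumerable.encode_ofNat]
    exact Nat.pair_unpair m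

open Classical in
theorem Rat.eqv_eq_countP (q : ℚ) :
    Denumerable.eqv ℚ q = (List.range (encode q)).countP (· ∈ Set.range (encode : ℚ → ℕ)) := by
  show (List.range _).countP _ = _
  congr!

theorem Primrec.rat_of_num_den {α : Type*} [Primcodable α] {f : α → ℚ}
    (hnum : Primrec fun a => (f a).num) (hden : Primrec fun a => (f a).den) : Primrec f := by
  classical
  have hrange : PrimrecPred (· ∈ Set.range (encode : ℚ → ℕ)) :=
    ((Primrec.nat_lt.comp (Primrec.const 0) (Primrec.snd.comp Primrec.unpair)).and
      (Primrec.eq.comp (Primrec.nat_gcd.comp (Primrec.int_natAbs.comp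
        ((Primrec.ofNat ℤ).comp (Primrec.fst.comp Primrec.unpair)))
          (Primrec.snd.comp Primrec.unpair)) (Primrec.const 1))).of_eq
      fun m => (Rat.mem_range_encode_iff m).symm
  have hcode : Primrec fun a => encode (f a) :=
    Primrec₂.natPair.comp (Primrec.encode.comp hnum) hden
  exact Primrec.encode_iff.1 (((Primrec.list_countP hrange).comp
    (Primrec.list_range.comp hcode)).of_eq fun a => (Rat.eqv_eq_countP (f a)).symm)

def dyadic (n k : ℕ) : ℚ := (2 * k + 1) / 2 ^ (n + 1)

theorem dyadic_eq_intCast_div (n k : ℕ) :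
    dyadic n k = ((2 * k + 1 : ℤ) : ℚ) / ((2 ^ (n + 1) : ℤ) : ℚ) := by
  push_cast [dyadic]
  rfl

theorem natAbs_two_mul_add_one_coprime_two_pow (n k : ℕ) :
    (2 * k + 1 : ℤ).natAbs.Coprime ((2 : ℤ) ^ n).natAbs := by
  rw [Int.natAbs_pow]
  exact Nat.Coprime.pow_right _ (by simp)

theorem dyadic_num (n k : ℕ) : (dyadic n k).num = 2 * k + 1 := by
  rw [dyadic_eq_intCast_div]
  exact Rat.num_div_eq_of_coprime (by positivity) (natAbs_two_mul_add_one_coprime_two_pow (n + 1) k)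

theorem dyadic_den (n k : ℕ) : (dyadic n k).den = 2 ^ (n + 1) := by
  rw [dyadic_eq_intCast_div]
  exact_mod_cast
    Rat.den_div_eq_of_coprime (by positivity) (natAbs_two_mul_add_one_coprime_two_pow (n + 1) k)

theorem Primrec.dyadic : Primrec₂ dyadic :=
  Primrec.rat_of_num_den
    ((Primrec.int_natCast.comp (Primrec.nat_double_succ.comp Primrec.snd)).of_eq fun p => by
      simp [dyadic_num])
    ((Primrec.nat_pow.comp (Primrec.const 2) (Primrec.succ.comp Primrec.fst)).of_eq fun p => by
      rw [dyadic_den])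

def prefixCode (p : ℕ → Prop) [DecidablePred p] : ℕ → ℕ
  | 0 => 0
  | n + 1 => 2 * prefixCode p n + if p n then 1 else 0

theorem ComputablePred.of_prefixCode {p : ℕ → Prop} [DecidablePred p] {f : ℕ → ℕ → Bool}
    (hf : Computable₂ f) (hp : ∀ n, p n ↔ f n (prefixCode p n)) : ComputablePred p := by
  let K : ℕ → ℕ := fun n => Nat.rec 0 (fun m k => 2 * k + bif f m k then 1 else 0) n
  have hstep : Computable fun q : ℕ × ℕ => 2 * q.2 + bif f q.1 q.2 then 1 else 0 :=
    Primrec.nat_add.to_comp.comp (Primrec.nat_double.to_comp.comp Computable.snd)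
      (Computable.cond (hf.comp Computable.fst Computable.snd)
        (Computable.const 1) (Computable.const 0))
  have hK : Computable K :=
    Computable.nat_rec Computable.id (Computable.const 0) (hstep.comp Computable.snd).to₂
  have hK_eq : ∀ n, K n = prefixCode p n := by
    intro n
    induction n with
    | zero => rfl
    | succ n ih =>
      show 2 * K n + (bif f n (K n) then 1 else 0) = 2 * prefixCode p n + if p n then 1 else 0
      rw [ih]
      cases hfn : f n (prefixCode p n) <;> simp [hfn, hp n]
  exact ComputablePred.computable_iff.2 ⟨fun n => f n (K n), hf.comp Computable.id hK,
    funext fun n => propext ((hp n).trans (by simp only [hK_eq]))⟩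

noncomputable def binaryTerm (A : Set ℕ) (a : ℕ) : ℝ :=
  A.indicator (fun a : ℕ => (2 : ℝ) ^ (-((a : ℤ) + 1))) a

section binaryTerm

variable {A : Set ℕ} {a : ℕ}

theorem binaryTerm_of_mem (h : a ∈ A) : binaryTerm A a = 2⁻¹ ^ (a + 1) := by
  rw [binaryTerm, Set.indicator_of_mem h, inv_pow, ← zpow_natCast, ← zpow_neg]
  push_cast
  rfl

theorem binaryTerm_of_notMem (h : a ∉ A) : binaryTerm A a = 0 :=
  Set.indicator_of_notMem h _

theorem binaryTerm_nonneg (A : Set ℕ) (a : ℕ) : 0 ≤ binaryTerm A a := by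
  by_cases h : a ∈ A
  · rw [binaryTerm_of_mem h]; positivity
  · rw [binaryTerm_of_notMem h]

theorem binaryTerm_le (A : Set ℕ) (a : ℕ) : binaryTerm A a ≤ 2⁻¹ ^ (a + 1) := by
  by_cases h : a ∈ A
  · rw [binaryTerm_of_mem h]
  · rw [binaryTerm_of_notMem h]; positivity

theorem summable_binaryTerm (A : Set ℕ) : Summable (binaryTerm A) :=
  ((summable_geometric_of_lt_one (by norm_num) (by norm_num : (2⁻¹ : ℝ) < 1)).comp_injective
    (add_left_injective 1)).of_nonneg_of_le (binaryTerm_nonneg A) (binaryTerm_le A)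

theorem tsum_binaryTerm_add_le (A : Set ℕ) (m : ℕ) :
    ∑' i, binaryTerm A (i + m) ≤ 2⁻¹ ^ m := by
  have hgeom : Summable fun i : ℕ => (2⁻¹ : ℝ) ^ i :=
    summable_geometric_of_lt_one (by norm_num) (by norm_num)
  calc ∑' i, binaryTerm A (i + m) ≤ ∑' i : ℕ, 2⁻¹ ^ (m + 1) * 2⁻¹ ^ i :=
        ((summable_nat_add_iff m).2 (summable_binaryTerm A)).tsum_le_tsum
          (fun i => (binaryTerm_le A _).trans_eq (by ring)) (hgeom.mul_left _)
    _ = 2⁻¹ ^ m := by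
        rw [tsum_mul_left, tsum_geometric_inv_two, pow_succ]; ring

theorem tsum_binaryTerm_add_pos (h : a ∈ A) {m : ℕ} (ha : m ≤ a) :
    0 < ∑' i, binaryTerm A (i + m) := by
  refine ((summable_nat_add_iff m).2 (summable_binaryTerm A)).tsum_pos
    (fun i => binaryTerm_nonneg A _) (a - m) ?_
  rw [Nat.sub_add_cancel ha, binaryTerm_of_mem h]
  positivity

theorem mem_iff_lt_tsum_binaryTerm (hA : A.Infinite) (n : ℕ) :
    n ∈ A ↔ ∑ i ∈ range n, binaryTerm A i + 2⁻¹ ^ (n + 1) < ∑' i, binaryTerm A i := by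
  rw [← (summable_binaryTerm A).sum_add_tsum_nat_add (n + 1), sum_range_succ]
  by_cases h : n ∈ A
  · obtain ⟨a, haA, hna⟩ := hA.exists_gt n
    simpa [h, binaryTerm_of_mem h] using tsum_binaryTerm_add_pos haA hna
  · simpa [h, binaryTerm_of_notMem h] using tsum_binaryTerm_add_le A (n + 1)

theorem prefixCode_mem_eq (A : Set ℕ) [DecidablePred (· ∈ A)] (n : ℕ) :
    (prefixCode (· ∈ A) n : ℝ) = 2 ^ n * ∑ i ∈ range n, binaryTerm A i := by
  induction n with
  | zero => simp [prefixCode]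
  | succ n ih =>
    by_cases h : n ∈ A
    · simp only [prefixCode, h, if_true, sum_range_succ, binaryTerm_of_mem h]
      push_cast
      rw [ih, inv_pow]
      field_simp
      ring
    · simp only [prefixCode, h, if_false, sum_range_succ, binaryTerm_of_notMem h]
      push_cast
      rw [ih]
      ring

theorem dyadic_prefixCode_mem (A : Set ℕ) [DecidablePred (· ∈ A)] (n : ℕ) :
    (dyadic n (prefixCode (· ∈ A) n) : ℝ) = ∑ i ∈ range n, binaryTerm A i + 2⁻¹ ^ (n + 1) := by
  rw [dyadic, Rat.cast_div]
  push_cast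
  rw [prefixCode_mem_eq, inv_pow]
  field_simp
  ring

end binaryTerm

theorem stmt12 (A : Set ℕ) (x : ℝ)
    (hx : x = ∑' a : ℕ, Set.indicator A (fun a => (2 : ℝ) ^ (-((a : ℤ) + 1))) a)
    (hcut : ComputablePred fun q : ℚ => (q : ℝ) < x) :
    ComputablePred fun n : ℕ => n ∈ A := by
  classical
  by_cases hfin : A.Finite
  · exact hfin.primrecPred_mem.computablePred
  have hquery : Computable₂ fun n k => decide ((dyadic n k : ℝ) < x) :=
    hcut.decide.comp₂ Primrec.dyadic.to_comp
  refine ComputablePred.of_prefixCode hquery fun n => ?_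
  rw [decide_eq_true_iff, dyadic_prefixCode_mem, hx]
  exact mem_iff_lt_tsum_binaryTerm hfin n
end

section
/- Let X be a separable metric space, {μₙ} probability measures on X, and suppose that for some fixed j with radius r > 0 and dense sequence {xᵢ}, the set {k ∈ ℕ : ∃n, μₙ(⋃_{i=0}^{k} B(xᵢ, r)) ≤ 1 − ε} is infinite for some ε > 0. Then there exists a subsequence {μ_{n_k}} and a strictly increasing sequence {m_k} with μ_{n_k}(⋃_{i=0}^{m_k} B(xᵢ, r)) ≤ 1 − ε for all k, and consequently no subsequence of {μ_{n_k}} can weakly converge to a probability measure μ, since otherwise the Portmanteau inequality liminf_k μ_{n_k}(U) ≥ μ(U) for open U would force μ(X) ≤ 1 − ε < 1. -/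
/-!
Let `s k` be the union of the first `k + 1` balls; these open sets increase to `X`, so for each
fixed `n` the mass `μ n (s k)` tends to `1`. Hence only finitely many `k` are witnessed by a given
`n`, and the infinitely many witnessed `k` force arbitrarily large witnesses `n`: this yields the
increasing pairs `(n k, m k)`. If a subsequence converged weakly to `ν`, the Portmanteau inequality
would give `ν (s K) ≤ 1 - ε` for every `K`, hence `ν X ≤ 1 - ε < 1`.
-/

open MeasureTheory Metric Filter Topology ENNReal

theorem exists_strictMono_pair_of_infinite_of_eventually_not {p : ℕ → ℕ → Prop}
    (hfin : ∀ n, ∀ᶠ k in atTop, ¬ p n k) (hinf : {k | ∃ n, p n k}.Infinite) :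
    ∃ n m : ℕ → ℕ, StrictMono n ∧ StrictMono m ∧ ∀ k, p (n k) (m k) := by
  obtain ⟨m, hm, hwit⟩ :=
    extraction_of_frequently_atTop (Nat.frequently_atTop_iff_infinite.2 hinf)
  choose n hn using hwit
  have hn_tendsto : Tendsto n atTop atTop := by
    refine tendsto_atTop.2 fun N => ?_
    have hsmall : ∀ᶠ k in atTop, ∀ i ∈ Set.Iio N, ¬ p i (m k) :=
      (Set.finite_Iio N).eventually_all.2 fun i _ => hm.tendsto_atTop.eventually (hfin i)
    filter_upwards [hsmall] with k hk
    exact not_lt.1 fun hlt => hk _ hlt (hn k)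
  obtain ⟨ψ, hψ, hnψ⟩ := strictMono_subseq_of_tendsto_atTop hn_tendsto
  exact ⟨n ∘ ψ, m ∘ ψ, hnψ, hm.comp hψ, fun k => hn (ψ k)⟩

theorem iUnion_biUnion_range_ball_eq_univ {X : Type*} [PseudoMetricSpace X] {x : ℕ → X}
    (hx : DenseRange x) {r : ℝ} (hr : 0 < r) :
    ⋃ k, ⋃ i ∈ Finset.range (k + 1), ball (x i) r = Set.univ := by
  refine Set.eq_univ_of_forall fun y => ?_
  obtain ⟨i, hi⟩ := hx.exists_dist_lt y hr
  exact Set.mem_iUnion.2 ⟨i, Set.mem_biUnion (Finset.self_mem_range_succ i)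
    (mem_ball.2 (dist_comm y (x i) ▸ hi))⟩

namespace MeasureTheory.ProbabilityMeasure

variable {X ι : Type*} [TopologicalSpace X] [MeasurableSpace X] [OpensMeasurableSpace X]
  {L : Filter ι} {P : ι → ProbabilityMeasure X} {ν : ProbabilityMeasure X}

theorem tendsto_of_forall_bounded_integral_tendsto
    (h : ∀ f : X → ℝ, Continuous f → (∃ M : ℝ, ∀ y, |f y| ≤ M) →
      Tendsto (fun i => ∫ y, f y ∂(P i : Measure X)) L
        (𝓝 (∫ y, f y ∂(ν : Measure X)))) :
    Tendsto P L (𝓝 ν) :=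
  tendsto_iff_forall_integral_tendsto.2 fun f =>
    h f f.continuous ⟨‖f‖, fun y => f.norm_coe_le_norm y⟩

variable [HasOuterApproxClosed X] [L.NeBot]

theorem measure_le_of_tendsto_of_eventually_le (hP : Tendsto P L (𝓝 ν)) {U : Set X}
    (hU : IsOpen U) {c : ℝ≥0∞} (hle : ∀ᶠ i in L, (P i : Measure X) U ≤ c) :
    (ν : Measure X) U ≤ c :=
  (le_liminf_measure_open_of_tendsto hP hU).trans (liminf_le_of_frequently_le hle.frequently)

theorem measure_univ_le_of_tendsto (hP : Tendsto P L (𝓝 ν)) {s : ℕ → Set X}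
    (hmono : Monotone s) (hopen : ∀ k, IsOpen (s k)) (hcover : ⋃ k, s k = Set.univ)
    {m : ι → ℕ} (hm : Tendsto m L atTop) {c : ℝ≥0∞}
    (hle : ∀ i, (P i : Measure X) (s (m i)) ≤ c) :
    (ν : Measure X) Set.univ ≤ c := by
  have hK : ∀ K, (ν : Measure X) (s K) ≤ c := fun K =>
    measure_le_of_tendsto_of_eventually_le hP (hopen K) <|
      (hm.eventually_ge_atTop K).mono fun i hi => (measure_mono (hmono hi)).trans (hle i)
  have hlim := tendsto_measure_iUnion_atTop (μ := (ν : Measure X)) hmono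
  rw [hcover] at hlim
  exact le_of_tendsto' hlim hK

end MeasureTheory.ProbabilityMeasure

theorem stmt14_general {X : Type*} [MetricSpace X]
    [MeasurableSpace X] [BorelSpace X]
    (μ : ℕ → Measure X) [∀ n, IsProbabilityMeasure (μ n)]
    (x : ℕ → X) (hx : DenseRange x) (r : ℝ) (hr : 0 < r)
    (ε : ℝ) (hε : 0 < ε)
    (hinf : {k : ℕ | ∃ n : ℕ,
        (μ n (⋃ i ∈ Finset.range (k + 1), ball (x i) r)).toReal ≤ 1 - ε}.Infinite) :
    ∃ n m : ℕ → ℕ, StrictMono n ∧ StrictMono m ∧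
      (∀ k, (μ (n k) (⋃ i ∈ Finset.range (m k + 1), ball (x i) r)).toReal ≤ 1 - ε) ∧
      ∀ φ : ℕ → ℕ, StrictMono φ → ∀ ν : Measure X, IsProbabilityMeasure ν →
        ¬ (∀ f : X → ℝ, Continuous f → (∃ M : ℝ, ∀ y, |f y| ≤ M) →
            Tendsto (fun k => ∫ y, f y ∂(μ (n (φ k)))) atTop (nhds (∫ y, f y ∂ν))) := by
  set s : ℕ → Set X := fun k => ⋃ i ∈ Finset.range (k + 1), ball (x i) r
  have hmono : Monotone s := fun a b hab =>
    Set.biUnion_subset_biUnion_left (Finset.range_subset_range.2 (Nat.succ_le_succ hab))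
  have hcover : ⋃ k, s k = Set.univ := iUnion_biUnion_range_ball_eq_univ hx hr
  have hfin : ∀ n, ∀ᶠ k in atTop, ¬ (μ n (s k)).toReal ≤ 1 - ε := by
    intro n
    have hlim := tendsto_measure_iUnion_atTop (μ := μ n) hmono
    rw [hcover, measure_univ] at hlim
    exact ((tendsto_toReal one_ne_top).comp hlim).eventually
      (lt_mem_nhds (by rw [toReal_one]; linarith)) |>.mono fun k => not_le.2
  obtain ⟨n, m, hn, hm, hle⟩ :=
    exists_strictMono_pair_of_infinite_of_eventually_not
      (p := fun n k => (μ n (s k)).toReal ≤ 1 - ε) hfin hinf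
  have hle' : ∀ k, μ (n k) (s (m k)) ≤ ENNReal.ofReal (1 - ε) := fun k =>
    (ofReal_toReal (measure_ne_top _ _)).symm.le.trans (ofReal_le_ofReal (hle k))
  refine ⟨n, m, hn, hm, hle, fun φ hφ ν hν hconv => ?_⟩
  have hP := ProbabilityMeasure.tendsto_of_forall_bounded_integral_tendsto
    (P := fun k => ⟨μ (n (φ k)), inferInstance⟩) (ν := ⟨ν, hν⟩) hconv
  have hν_le := ProbabilityMeasure.measure_univ_le_of_tendsto hP hmono
    (fun k => isOpen_biUnion fun i _ => isOpen_ball) hcover (hm.comp hφ).tendsto_atTop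
    fun k => hle' (φ k)
  simp only [ProbabilityMeasure.coe_mk, measure_univ, one_le_ofReal] at hν_le
  linarith

theorem stmt14 {X : Type*} [MetricSpace X] [TopologicalSpace.SeparableSpace X]
    [MeasurableSpace X] [BorelSpace X]
    (μ : ℕ → Measure X) [∀ n, IsProbabilityMeasure (μ n)]
    (x : ℕ → X) (hx : DenseRange x) (r : ℝ) (hr : 0 < r)
    (ε : ℝ) (hε : 0 < ε)
    (hinf : {k : ℕ | ∃ n : ℕ,
        (μ n (⋃ i ∈ Finset.range (k + 1), ball (x i) r)).toReal ≤ 1 - ε}.Infinite) :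
    ∃ n m : ℕ → ℕ, StrictMono n ∧ StrictMono m ∧
      (∀ k, (μ (n k) (⋃ i ∈ Finset.range (m k + 1), ball (x i) r)).toReal ≤ 1 - ε) ∧
      ∀ φ : ℕ → ℕ, StrictMono φ → ∀ ν : Measure X, IsProbabilityMeasure ν →
        ¬ (∀ f : X → ℝ, Continuous f → (∃ M : ℝ, ∀ y, |f y| ≤ M) →
            Tendsto (fun k => ∫ y, f y ∂(μ (n (φ k)))) atTop (nhds (∫ y, f y ∂ν))) :=
  stmt14_general μ x hx r hr ε hε hinf
end

section
/- Let X be a metric space and μ, ν finite Borel measures on X. Suppose ε > 0 and A is a Borel set with μ(A ∖ A₀) ≤ ε, where A₀ ⊆ B(A, ε) is Borel, A ⊆ A₀ ∪ R with μ(R), ν(R) ≤ ε, and |ν(A₀) − μ(A₀)| ≤ ε. Then μ(A) ≤ ν(B(A, 4ε)) + 4ε and ν(A) ≤ μ(B(A, 4ε)) + 4ε; hence if such data exist for every Borel set A simultaneously (with the same A₀-type approximants drawn from a fixed finite family), the Prokhorov distance satisfies d_P(μ, ν) ≤ 4ε. -/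
open MeasureTheory Metric

/-
Split `A` as `A₀ ∪ (A \ A₀)` for `μ` and cover it by `A₀ ∪ R` for `ν`. On `A₀` the two measures
differ by at most `ε`, the remainders carry mass at most `ε`, and `A₀` lies in the `ε`-thickening
of `A`; this already gives both Prokhorov inequalities with radius `ε` and slack `2ε`, which is
then weakened to the uniform `4ε`.
-/

theorem ENNReal.le_add_ofReal_of_toReal_le_add {a b : ENNReal} {ε : ℝ} (ha : a ≠ ⊤)
    (h : a.toReal ≤ b.toReal + ε) : a ≤ b + ENNReal.ofReal ε :=
  calc a = ENNReal.ofReal a.toReal := (ENNReal.ofReal_toReal ha).symm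
    _ ≤ ENNReal.ofReal (b.toReal + ε) := ENNReal.ofReal_le_ofReal h
    _ ≤ ENNReal.ofReal b.toReal + ENNReal.ofReal ε := ENNReal.ofReal_add_le
    _ ≤ b + ENNReal.ofReal ε := by gcongr; exact ENNReal.ofReal_toReal_le

namespace MeasureTheory

variable {X : Type*} [MeasurableSpace X]

theorem measure_le_add_of_subset_union {μ ν : Measure X} {A A₀ E T : Set X} {a b : ENNReal}
    (hcov : A ⊆ A₀ ∪ E) (hT : A₀ ⊆ T) (hA₀ : μ A₀ ≤ ν A₀ + a) (hE : μ E ≤ b) :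
    μ A ≤ ν T + (a + b) :=
  calc μ A ≤ μ (A₀ ∪ E) := measure_mono hcov
    _ ≤ μ A₀ + μ E := measure_union_le _ _
    _ ≤ ν T + a + b := add_le_add (hA₀.trans (by gcongr)) hE
    _ = ν T + (a + b) := add_assoc _ _ _

variable [PseudoMetricSpace X]

theorem measure_le_measure_thickening_add_of_approx (μ ν : Measure X) [IsFiniteMeasure μ]
    [IsFiniteMeasure ν] {ε : ℝ} {A A₀ R : Set X} (hA₀ : A₀ ⊆ thickening ε A)
    (hμ : μ (A \ A₀) ≤ ENNReal.ofReal ε) (hcov : A ⊆ A₀ ∪ R) (hν : ν R ≤ ENNReal.ofReal ε)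
    (habs : |(ν A₀).toReal - (μ A₀).toReal| ≤ ε) :
    μ A ≤ ν (thickening ε A) + ENNReal.ofReal (2 * ε) ∧
      ν A ≤ μ (thickening ε A) + ENNReal.ofReal (2 * ε) := by
  have hε : 0 ≤ ε := (abs_nonneg _).trans habs
  have h2ε : ENNReal.ofReal ε + ENNReal.ofReal ε = ENNReal.ofReal (2 * ε) := by
    rw [← ENNReal.ofReal_add hε hε, two_mul]
  obtain ⟨hνμ, hμν⟩ := abs_sub_le_iff.mp habs
  refine ⟨?_, ?_⟩ <;> rw [← h2ε]
  · refine measure_le_add_of_subset_union (Set.subset_union_right.trans Set.union_sdiff_self.superset) hA₀ ?_ hμ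
    exact ENNReal.le_add_ofReal_of_toReal_le_add (measure_ne_top μ A₀) (by linarith)
  · refine measure_le_add_of_subset_union hcov hA₀ ?_ hν
    exact ENNReal.le_add_ofReal_of_toReal_le_add (measure_ne_top ν A₀) (by linarith)

theorem levyProkhorovEDist_le_ofReal_of_forall {μ ν : Measure X} {r : ℝ}
    (h : ∀ B, MeasurableSet B → μ B ≤ ν (thickening r B) + ENNReal.ofReal r ∧
      ν B ≤ μ (thickening r B) + ENNReal.ofReal r) :
    levyProkhorovEDist μ ν ≤ ENNReal.ofReal r := by
  refine levyProkhorovEDist_le_of_forall μ ν _ fun δ B hδ hδ_top hB => ?_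
  have hr : r ≤ δ.toReal := (ENNReal.ofReal_le_iff_le_toReal hδ_top.ne).mp hδ.le
  obtain ⟨hμ, hν⟩ := h B hB
  exact ⟨hμ.trans (by gcongr), hν.trans (by gcongr)⟩

end MeasureTheory

theorem stmt15_general {X : Type*} [MetricSpace X] [MeasurableSpace X]
    (μ ν : Measure X) [IsFiniteMeasure μ] [IsFiniteMeasure ν]
    (ε : ℝ) :
    (∀ A A₀ R : Set X, MeasurableSet A → MeasurableSet A₀ → MeasurableSet R →
      A₀ ⊆ thickening ε A → μ (A \ A₀) ≤ ENNReal.ofReal ε →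
      A ⊆ A₀ ∪ R → μ R ≤ ENNReal.ofReal ε → ν R ≤ ENNReal.ofReal ε →
      |(ν A₀).toReal - (μ A₀).toReal| ≤ ε →
      μ A ≤ ν (thickening (4 * ε) A) + ENNReal.ofReal (4 * ε) ∧
      ν A ≤ μ (thickening (4 * ε) A) + ENNReal.ofReal (4 * ε)) ∧
    ((∀ A : Set X, MeasurableSet A → ∃ A₀ R : Set X,
        MeasurableSet A₀ ∧ MeasurableSet R ∧
        A₀ ⊆ thickening ε A ∧ μ (A \ A₀) ≤ ENNReal.ofReal ε ∧
        A ⊆ A₀ ∪ R ∧ μ R ≤ ENNReal.ofReal ε ∧ ν R ≤ ENNReal.ofReal ε ∧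
        |(ν A₀).toReal - (μ A₀).toReal| ≤ ε) →
      levyProkhorovEDist μ ν ≤ ENNReal.ofReal (4 * ε)) := by
  have key : ∀ A A₀ R : Set X, A₀ ⊆ thickening ε A → μ (A \ A₀) ≤ ENNReal.ofReal ε →
      A ⊆ A₀ ∪ R → ν R ≤ ENNReal.ofReal ε → |(ν A₀).toReal - (μ A₀).toReal| ≤ ε →
      μ A ≤ ν (thickening (4 * ε) A) + ENNReal.ofReal (4 * ε) ∧
      ν A ≤ μ (thickening (4 * ε) A) + ENNReal.ofReal (4 * ε) := by
    intro A A₀ R hA₀ hμ hcov hν habs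
    have hε : 0 ≤ ε := (abs_nonneg _).trans habs
    obtain ⟨hμν, hνμ⟩ :=
      measure_le_measure_thickening_add_of_approx μ ν hA₀ hμ hcov hν habs
    have hrad : ε ≤ 4 * ε := by linarith
    have hslack : 2 * ε ≤ 4 * ε := by linarith
    exact ⟨hμν.trans (by gcongr), hνμ.trans (by gcongr)⟩
  refine ⟨fun A A₀ R _ _ _ hA₀ hμ hcov _ hν habs => key A A₀ R hA₀ hμ hcov hν habs,
    fun hdata => levyProkhorovEDist_le_ofReal_of_forall fun B hB => ?_⟩
  obtain ⟨A₀, R, -, -, hA₀, hμ, hcov, -, hν, habs⟩ := hdata B hB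
  exact key B A₀ R hA₀ hμ hcov hν habs

theorem stmt15 {X : Type*} [MetricSpace X] [MeasurableSpace X] [BorelSpace X]
    (μ ν : Measure X) [IsFiniteMeasure μ] [IsFiniteMeasure ν]
    (ε : ℝ) (hε : 0 < ε) :
    (∀ A A₀ R : Set X, MeasurableSet A → MeasurableSet A₀ → MeasurableSet R →
      A₀ ⊆ thickening ε A → μ (A \ A₀) ≤ ENNReal.ofReal ε →
      A ⊆ A₀ ∪ R → μ R ≤ ENNReal.ofReal ε → ν R ≤ ENNReal.ofReal ε →
      |(ν A₀).toReal - (μ A₀).toReal| ≤ ε →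
      μ A ≤ ν (thickening (4 * ε) A) + ENNReal.ofReal (4 * ε) ∧
      ν A ≤ μ (thickening (4 * ε) A) + ENNReal.ofReal (4 * ε)) ∧
    ((∀ A : Set X, MeasurableSet A → ∃ A₀ R : Set X,
        MeasurableSet A₀ ∧ MeasurableSet R ∧
        A₀ ⊆ thickening ε A ∧ μ (A \ A₀) ≤ ENNReal.ofReal ε ∧
        A ⊆ A₀ ∪ R ∧ μ R ≤ ENNReal.ofReal ε ∧ ν R ≤ ENNReal.ofReal ε ∧
        |(ν A₀).toReal - (μ A₀).toReal| ≤ ε) →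
      levyProkhorovEDist μ ν ≤ ENNReal.ofReal (4 * ε)) :=
  stmt15_general μ ν ε
end
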